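/- Let V be a vector space of dimension at least 3 over F_q (q odd) with a nondegenerate symmetric bilinear form, let ⟨p⟩ be a nondegenerate 1-dimensional subspace and m a hyperbolic (plus type) nondegenerate 2-dimensional subspace such that ⟨p⟩ + m is a nondegenerate 3-dimensional subspace. Then there exist at least (q−5)/2 hyperbolic 2-dimensional subspaces through ⟨p⟩ intersecting m in a nondegenerate 1-dimensional subspace. -/

import Mathlib

open Module

/-- A subspace `W` is a *hyperbolic line* for the symmetric bilinear form `B` if it is
2-dimensional, nondegenerate, and contains a nonzero isotropic vector (Witt index 1). -/
def IsHyperbolicLine {F V : Type*} [Field F] [AddCommGroup V] [Module F V]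
    (B : LinearMap.BilinForm F V) (W : Submodule F V) : Prop :=
  finrank F W = 2 ∧ (B.restrict W).Nondegenerate ∧ ∃ v ∈ W, v ≠ 0 ∧ B v v = 0

/-!
Write `m = span {e, f}` with `e`, `f` isotropic and `B e f = 1`. For `t ≠ 0` the vector
`x = e + t • f` is anisotropic (`B x x = 2 * t`), so `span {p, x}` meets `m` in the nondegenerate
point `⟨x⟩`; this line is hyperbolic as soon as the discriminant
`(B p e + t * B p f) ^ 2 - 2 * t * B p p` of its Gram matrix is a nonzero square. Completing the
square and parametrizing the conic `v ^ 2 + d = s ^ 2` by `u = s - v` shows that this happens for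
at least `(q - 5) / 2` values of `t`.
-/

open Finset

theorem card_filter_sub_one_le_card_filter_ne_comp {α : Type*} [Fintype α] [DecidableEq α]
    {g : α → α} (hg : Function.Injective g) (P : α → Prop) [DecidablePred P] (a : α) :
    #{v | P v} - 1 ≤ #{t | t ≠ a ∧ P (g t)} := by
  refine (pred_card_le_card_erase (a := g a)).trans (card_le_card_of_surjOn g fun v hv => ?_)
  obtain ⟨hva, hv⟩ := mem_erase.mp hv
  obtain ⟨t, rfl⟩ := Finite.surjective_of_injective hg v
  exact ⟨t, by simpa [hg.ne_iff] using ⟨fun h => hva (h ▸ rfl), (mem_filter.mp hv).2⟩,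
    rfl⟩

theorem two_ne_zero_of_odd_card {F : Type*} [Field F] [Fintype F]
    (h : Odd (Fintype.card F)) : (2 : F) ≠ 0 :=
  Ring.two_ne_zero fun h2 => by
    have := FiniteField.even_card_iff_char_two.mp h2
    have := Nat.odd_iff.mp h
    omega

section Counting

variable {F : Type*} [Field F] [Fintype F] [DecidableEq F]

theorem card_filter_sq_add_mul_add_eq_zero_le_two (β γ : F) :
    #{s | s ^ 2 + β * s + γ = 0} ≤ 2 := by
  by_cases h : ∃ r, r ^ 2 + β * r + γ = 0
  · obtain ⟨r, hr⟩ := h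
    refine (card_le_card fun s hs => ?_).trans (card_le_two (a := r) (b := -β - r))
    have : (s - r) * (s - (-β - r)) = 0 := by
      linear_combination (mem_filter.mp hs).2 - hr
    rcases mul_eq_zero.mp this with h | h <;> simp [sub_eq_zero.mp h]
  · push Not at h
    simp [filter_false_of_mem fun s _ => h s]

theorem card_univ_sub_one_div_two_le_card_nonzero_sq :
    (Fintype.card F - 1) / 2 ≤ #{u : F | ∃ s ≠ 0, u = s ^ 2} := by
  have key : #(univ.erase (0 : F)) ≤ 2 * #{u : F | ∃ s ≠ 0, u = s ^ 2} := by
    refine card_le_mul_card_image_of_maps_to (f := fun s => s ^ 2) ?_ 2 fun u _ => ?_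
    · intro s hs
      simpa using ⟨s, ne_of_mem_erase hs, rfl⟩
    · refine (card_le_card fun s hs => ?_).trans
        (card_filter_sq_add_mul_add_eq_zero_le_two 0 (-u))
      simp only [mem_filter] at hs ⊢
      exact ⟨mem_univ _, by linear_combination hs.2⟩
  rw [card_erase_of_mem (mem_univ _), card_univ] at key
  omega

theorem card_univ_sub_three_div_two_le_card_sq_add_eq_nonzero_sq (htwo : (2 : F) ≠ 0) (d : F) :
    (Fintype.card F - 3) / 2 ≤ #{v : F | ∃ s ≠ 0, v ^ 2 + d = s ^ 2} := by
  have hT : Fintype.card F - 3 ≤ #{u : F | u ≠ 0 ∧ u ^ 2 + d ≠ 0} := by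
    have hcompl : #{u : F | ¬(u ≠ 0 ∧ u ^ 2 + d ≠ 0)} ≤ 3 := by
      refine (card_le_card fun u hu => ?_).trans ((card_insert_le 0 _).trans
        (Nat.succ_le_succ (card_filter_sq_add_mul_add_eq_zero_le_two 0 d)))
      simp only [mem_filter, mem_univ, true_and, not_and_or, not_not, mem_insert] at hu ⊢
      rcases hu with h | h
      · exact Or.inl h
      · exact Or.inr (by linear_combination h)
    have := card_filter_add_card_filter_not (s := univ) (fun u : F => u ≠ 0 ∧ u ^ 2 + d ≠ 0)
    rw [card_univ] at this
    omega
  -- `u ↦ (d / u - u) / 2` parametrizes the conic `v ^ 2 + d = s ^ 2` by `u = s - v`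
  have key :
      #{u : F | u ≠ 0 ∧ u ^ 2 + d ≠ 0} ≤ 2 * #{v : F | ∃ s ≠ 0, v ^ 2 + d = s ^ 2} := by
    refine card_le_mul_card_image_of_maps_to (f := fun u => (d / u - u) / 2) ?_ 2
      fun v _ => ?_
    · intro u hu
      obtain ⟨hu0, hud⟩ := (mem_filter.mp hu).2
      simp only [mem_filter, mem_univ, true_and]
      refine ⟨(d / u + u) / 2, fun h => hud ?_, ?_⟩
      · field_simp at h
        linear_combination h
      · field_simp
        ring
    · refine (card_le_card fun u hu => ?_).trans
        (card_filter_sq_add_mul_add_eq_zero_le_two (2 * v) (-d))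
      simp only [mem_filter, mem_univ, true_and] at hu ⊢
      obtain ⟨⟨hu0, -⟩, huv⟩ := hu
      field_simp at huv
      linear_combination -huv
  omega

theorem card_univ_sub_five_div_two_le_card_quadratic_eq_nonzero_sq (htwo : (2 : F) ≠ 0)
    (a b : F) {c : F} (hc : c ≠ 0) :
    (Fintype.card F - 5) / 2 ≤
      #{t : F | t ≠ 0 ∧ ∃ s ≠ 0, (a + t * b) ^ 2 - 2 * c * t = s ^ 2} := by
  rcases eq_or_ne b 0 with rfl | hb
  · have hg : Function.Injective fun t : F => (a + t * 0) ^ 2 - 2 * c * t := fun t t' h => by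
      simpa [htwo, hc] using h
    have := card_filter_sub_one_le_card_filter_ne_comp hg (fun v => ∃ s ≠ 0, v = s ^ 2) 0
    have := card_univ_sub_one_div_two_le_card_nonzero_sq (F := F)
    omega
  · set k := (a * b - c) / b
    have hg : Function.Injective fun t : F => b * t + k := fun t t' h => by
      simpa [hb] using h
    have hcompleted (t : F) :
        (b * t + k) ^ 2 + (a ^ 2 - k ^ 2) = (a + t * b) ^ 2 - 2 * c * t := by
      simp only [k]
      field_simp
      ring
    have := card_filter_sub_one_le_card_filter_ne_comp hg
      (fun v => ∃ s ≠ 0, v ^ 2 + (a ^ 2 - k ^ 2) = s ^ 2) 0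
    simp only [hcompleted] at this
    have := card_univ_sub_three_div_two_le_card_sq_add_eq_nonzero_sq htwo (a ^ 2 - k ^ 2)
    omega

end Counting

section Geometry

variable {F V : Type*} [Field F] [AddCommGroup V] [Module F V] {B : LinearMap.BilinForm F V}

theorem finrank_span_pair {x y : V} (h : LinearIndependent F ![x, y]) :
    finrank F (Submodule.span F {x, y}) = 2 := by
  rw [← Matrix.range_cons_cons_empty x y ![], finrank_span_eq_card h, Fintype.card_fin]

theorem eq_zero_of_apply_smul_add_smul_eq_zero (hB : B.IsSymm) {u w : V}
    (hdet : B u u * B w w - B u w ^ 2 ≠ 0) {α β : F} (hu : B (α • u + β • w) u = 0)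
    (hw : B (α • u + β • w) w = 0) : α = 0 ∧ β = 0 := by
  simp only [map_add, map_smul, LinearMap.add_apply, LinearMap.smul_apply, smul_eq_mul,
    hB.eq w u] at hu hw
  constructor
  · exact (mul_eq_zero.mp (by linear_combination B w w * hu - B u w * hw :
      α * (B u u * B w w - B u w ^ 2) = 0)).resolve_right hdet
  · exact (mul_eq_zero.mp (by linear_combination B u u * hw - B u w * hu :
      β * (B u u * B w w - B u w ^ 2) = 0)).resolve_right hdet

theorem linearIndependent_pair_of_det_ne_zero (hB : B.IsSymm) {u w : V}
    (hdet : B u u * B w w - B u w ^ 2 ≠ 0) : LinearIndependent F ![u, w] :=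
  LinearIndependent.pair_iff.mpr fun α β h =>
    eq_zero_of_apply_smul_add_smul_eq_zero hB hdet (by simp [h]) (by simp [h])

theorem nondegenerate_restrict_span_pair (hB : B.IsSymm) {u w : V}
    (hdet : B u u * B w w - B u w ^ 2 ≠ 0) :
    (B.restrict (Submodule.span F {u, w})).Nondegenerate := by
  refine B.nondegenerate_restrict_of_disjoint_orthogonal hB.isRefl
    (Submodule.disjoint_def.mpr fun z hz hzo => ?_)
  obtain ⟨α, β, rfl⟩ := Submodule.mem_span_pair.mp hz
  have hzo := LinearMap.BilinForm.mem_orthogonal_iff.mp hzo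
  obtain ⟨rfl, rfl⟩ := eq_zero_of_apply_smul_add_smul_eq_zero hB hdet
    (by rw [hB.eq]; exact hzo u (Submodule.subset_span (by simp)))
    (by rw [hB.eq]; exact hzo w (Submodule.subset_span (by simp)))
  simp

theorem nondegenerate_restrict_span_singleton (hB : B.IsRefl) {x : V} (hx : B x x ≠ 0) :
    (B.restrict (F ∙ x)).Nondegenerate :=
  B.nondegenerate_restrict_of_disjoint_orthogonal hB
    (LinearMap.BilinForm.isCompl_span_singleton_orthogonal hx).disjoint

theorem isHyperbolicLine_span_pair (hB : B.IsSymm) {u w : V} (hu : B u u ≠ 0) {s : F}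
    (hs : s ≠ 0) (h : B u w ^ 2 - B u u * B w w = s ^ 2) :
    IsHyperbolicLine B (Submodule.span F {u, w}) := by
  have hdet : B u u * B w w - B u w ^ 2 ≠ 0 := by
    rw [show B u u * B w w - B u w ^ 2 = -s ^ 2 by linear_combination -h]
    exact neg_ne_zero.mpr (pow_ne_zero 2 hs)
  have hli := linearIndependent_pair_of_det_ne_zero hB hdet
  refine ⟨finrank_span_pair hli, nondegenerate_restrict_span_pair hB hdet, ?_⟩
  -- `l` is a root of `B u u * l ^ 2 + 2 * B u w * l + B w w`, whose discriminant is `4 * s ^ 2`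
  set l := (s - B u w) / B u u
  refine ⟨l • u + w, Submodule.add_mem _ (Submodule.smul_mem _ _ (Submodule.subset_span
    (by simp))) (Submodule.subset_span (by simp)), fun h0 => ?_, ?_⟩
  · simpa using (LinearIndependent.pair_iff.mp hli l 1 (by rwa [one_smul])).2
  · simp only [map_add, map_smul, LinearMap.add_apply, LinearMap.smul_apply, smul_eq_mul,
      hB.eq w u, l]
    field_simp
    linear_combination -h

theorem exists_hyperbolic_pair (hB : B.IsSymm) (htwo : (2 : F) ≠ 0) {m : Submodule F V}
    (hm : IsHyperbolicLine B m) :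
    ∃ e f : V, B e e = 0 ∧ B f f = 0 ∧ B e f = 1 ∧ m = Submodule.span F {e, f} := by
  obtain ⟨hrank, hnd, e, hem, he0, hee⟩ := hm
  obtain ⟨w, hw⟩ : ∃ w : m, B e w ≠ 0 := by
    by_contra! h
    exact he0 (congrArg Subtype.val (hnd.1 ⟨e, hem⟩ h))
  set f₀ := (B e w)⁻¹ • (w : V)
  have hef₀ : B e f₀ = 1 := by simp [f₀, hw]
  set f := f₀ - (B f₀ f₀ / 2) • e
  have hef : B e f = 1 := by simp [f, hef₀, hee]
  have hff : B f f = 0 := by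
    simp only [f, map_sub, map_smul, LinearMap.sub_apply, LinearMap.smul_apply, smul_eq_mul,
      hB.eq f₀ e, hef₀, hee]
    field_simp
    ring
  have hfm : f ∈ m := m.sub_mem (m.smul_mem _ w.2) (m.smul_mem _ hem)
  have hli : LinearIndependent F ![e, f] :=
    linearIndependent_pair_of_det_ne_zero hB (by simp [hee, hff, hef])
  have : FiniteDimensional F m := Module.finite_of_finrank_pos (by omega)
  refine ⟨e, f, hee, hff, hef, (Submodule.eq_of_le_of_finrank_eq ?_ ?_).symm⟩
  · exact Submodule.span_le.mpr (Set.insert_subset hem (Set.singleton_subset_iff.mpr hfm))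
  · rw [finrank_span_pair hli, hrank]

theorem span_pair_inf_eq_span_singleton {p x : V} {m : Submodule F V} (hp : p ∉ m)
    (hx : x ∈ m) : Submodule.span F {p, x} ⊓ m = F ∙ x := by
  have hdisj : (F ∙ p) ⊓ m = ⊥ :=
    (Submodule.disjoint_span_singleton.mpr fun h => absurd h hp).symm.eq_bot
  rw [Submodule.span_insert, sup_comm, sup_inf_assoc_of_le _ (by simpa using hx), hdisj,
    sup_bot_eq]

theorem span_singleton_add_smul_injective {e f : V} (h : LinearIndependent F ![e, f]) :
    Function.Injective fun t : F => F ∙ (e + t • f) := by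
  intro t t' htt
  obtain ⟨z, hz⟩ := Submodule.span_singleton_eq_span_singleton.mp htt
  rw [Units.smul_def] at hz
  obtain ⟨hz1, ht⟩ := LinearIndependent.pair_iff.mp h ((z : F) - 1) (z * t - t')
    (by rw [← sub_eq_zero.mpr hz]; module)
  linear_combination ht - t * hz1

theorem span_pair_isHyperbolicLine_and_inf_nondegenerate (hB : B.IsSymm) {p x : V}
    {m : Submodule F V} (hpm : p ∉ m) (hp : B p p ≠ 0) (hxm : x ∈ m) (hx : B x x ≠ 0)
    {s : F} (hs : s ≠ 0) (h : B p x ^ 2 - B p p * B x x = s ^ 2) :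
    p ∈ Submodule.span F {p, x} ∧ IsHyperbolicLine B (Submodule.span F {p, x}) ∧
      finrank F (Submodule.span F {p, x} ⊓ m : Submodule F V) = 1 ∧
      (B.restrict (Submodule.span F {p, x} ⊓ m)).Nondegenerate := by
  have hx0 : x ≠ 0 := by rintro rfl; simp at hx
  rw [span_pair_inf_eq_span_singleton hpm hxm]
  exact ⟨Submodule.subset_span (by simp), isHyperbolicLine_span_pair hB hp hs h,
    finrank_span_singleton hx0, nondegenerate_restrict_span_singleton hB.isRefl hx⟩

theorem card_le_ncard_span_pair_isHyperbolicLine [Fintype F] [DecidableEq F]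
    [Finite (Submodule F V)] (hB : B.IsSymm) (htwo : (2 : F) ≠ 0) {p e f : V} (hp : B p p ≠ 0)
    (hee : B e e = 0) (hff : B f f = 0) (hef : B e f = 1) (hpm : p ∉ Submodule.span F {e, f}) :
    #{t : F | t ≠ 0 ∧ ∃ s ≠ 0, (B p e + t * B p f) ^ 2 - 2 * B p p * t = s ^ 2} ≤
      Set.ncard {m' : Submodule F V | p ∈ m' ∧ IsHyperbolicLine B m' ∧
        finrank F (m' ⊓ Submodule.span F {e, f} : Submodule F V) = 1 ∧
        (B.restrict (m' ⊓ Submodule.span F {e, f})).Nondegenerate} := by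
  have hxm (t : F) : e + t • f ∈ Submodule.span F {e, f} :=
    Submodule.add_mem _ (Submodule.subset_span (by simp))
      (Submodule.smul_mem _ _ (Submodule.subset_span (by simp)))
  have hxx (t : F) : B (e + t • f) (e + t • f) = 2 * t := by
    simp only [map_add, map_smul, LinearMap.add_apply, LinearMap.smul_apply, smul_eq_mul, hee,
      hff, hef, hB.eq f e]
    ring
  have hline : Function.Injective fun t : F => Submodule.span F {p, e + t • f} := by
    intro t t' h
    refine span_singleton_add_smul_injective
      (linearIndependent_pair_of_det_ne_zero (u := e) (w := f) hB (by simp [hee, hff, hef])) ?_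
    simpa only [span_pair_inf_eq_span_singleton hpm (hxm _)] using
      congrArg (· ⊓ Submodule.span F {e, f}) h
  rw [← Set.ncard_coe_finset, ← Set.ncard_image_of_injective _ hline]
  refine Set.ncard_le_ncard ?_ (Set.toFinite _)
  rintro _ ⟨t, ht, rfl⟩
  obtain ⟨ht, s, hs, h⟩ := (mem_filter.mp ht).2
  refine span_pair_isHyperbolicLine_and_inf_nondegenerate hB hpm hp (hxm t)
    (hxx t ▸ mul_ne_zero htwo ht) hs ?_
  rw [hxx, map_add, map_smul, smul_eq_mul]
  linear_combination h

theorem finite_submodule_of_finrank_pos [Finite F] (h : 0 < finrank F V) :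
    Finite (Submodule F V) :=
  have : FiniteDimensional F V := Module.finite_of_finrank_pos h
  have : Finite V := Module.finite_of_finite F
  Finite.of_injective _ SetLike.coe_injective

end Geometry

theorem hyperbolic_lines_through_point_meeting_hyperbolic_line_general
    {F V : Type*} [Field F] [Fintype F] [AddCommGroup V] [Module F V]
    (q : ℕ) (hq : Fintype.card F = q) (hodd : Odd q) (hdim : 3 ≤ finrank F V)
    (B : LinearMap.BilinForm F V) (hsymm : B.IsSymm)
    (p : V) (hp : B p p ≠ 0)
    (m : Submodule F V) (hm : IsHyperbolicLine B m)
    (h3 : finrank F (Submodule.span F {p} ⊔ m : Submodule F V) = 3) :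
    (q - 5) / 2 ≤ Set.ncard {m' : Submodule F V | p ∈ m' ∧ IsHyperbolicLine B m' ∧
      finrank F (m' ⊓ m : Submodule F V) = 1 ∧ (B.restrict (m' ⊓ m)).Nondegenerate} := by
  classical
  subst hq
  have htwo : (2 : F) ≠ 0 := two_ne_zero_of_odd_card hodd
  have hpm : p ∉ m := fun hpm => by
    rw [sup_eq_right.mpr ((Submodule.span_singleton_le_iff_mem _ _).mpr hpm), hm.1] at h3
    omega
  have := finite_submodule_of_finrank_pos (F := F) (V := V) (by omega)
  obtain ⟨e, f, hee, hff, hef, rfl⟩ := exists_hyperbolic_pair hsymm htwo hm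
  exact (card_univ_sub_five_div_two_le_card_quadratic_eq_nonzero_sq htwo _ _ hp).trans
    (card_le_ncard_span_pair_isHyperbolicLine hsymm htwo hp hee hff hef hpm)

/-- Over `F_q` (`q` odd), in a space of dimension at least 3 with a nondegenerate
symmetric bilinear form: if `⟨p⟩` is a nondegenerate point and `m` a hyperbolic line
with `⟨p⟩ + m` a nondegenerate 3-space, then at least `(q-5)/2` hyperbolic lines
through `⟨p⟩` meet `m` in a nondegenerate point. -/
theorem hyperbolic_lines_through_point_meeting_hyperbolic_line
    {F V : Type*} [Field F] [Fintype F] [AddCommGroup V] [Module F V]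
    (q : ℕ) (hq : Fintype.card F = q) (hodd : Odd q) (hdim : 3 ≤ finrank F V)
    (B : LinearMap.BilinForm F V) (hsymm : B.IsSymm) (hB : B.Nondegenerate)
    (p : V) (hp : B p p ≠ 0)
    (m : Submodule F V) (hm : IsHyperbolicLine B m)
    (h3 : finrank F (Submodule.span F {p} ⊔ m : Submodule F V) = 3)
    (hnd : (B.restrict (Submodule.span F {p} ⊔ m)).Nondegenerate) :
    (q - 5) / 2 ≤ Set.ncard {m' : Submodule F V | p ∈ m' ∧ IsHyperbolicLine B m' ∧
      finrank F (m' ⊓ m : Submodule F V) = 1 ∧ (B.restrict (m' ⊓ m)).Nondegenerate} :=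
  hyperbolic_lines_through_point_meeting_hyperbolic_line_general q hq hodd hdim B hsymm p hp m hm h3
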